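/- arXiv:2212.02729 — 11 statements merged into one kernel-verified Lean document; each statement's English description precedes it below -/
import Mathlib

section
/- Let g₄ be the 4-dimensional 3-Lie algebra over K with basis e1, e2, e3, e4 and only nonvanishing basis bracket [e2,e3,e4] = e1 (up to skew-symmetry), with the adjoint action ad(x,y)z = [x,y,z] of g₄ on itself. Let H : g₄ → g₄ be the linear map with H(e_j) = Σ_{i=1}^{4} a_{ij} e_i for scalars a_{ij} ∈ K. Then H is a crossed homomorphism from g₄ to g₄ with respect to ad if and only if a_{21} = a_{31} = a_{41} = 0 and a_{11} = a_{22} + a_{33} + a_{44} + a_{23}a_{34}a_{42} + a_{24}a_{32}a_{43} + a_{22}a_{33}a_{44} − a_{24}a_{33}a_{42} − a_{22}a_{34}a_{43} − a_{23}a_{32}a_{44}. -/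
/-- The bracket of the 4-dimensional 3-Lie algebra `g₄` on `Fin 4 → K`
(basis `e₁ = Pi.single 0 1`, …, `e₄ = Pi.single 3 1`), trilinear, totally
skew-symmetric, and determined by `[e₂,e₃,e₄] = e₁` with all other basis
brackets vanishing. -/
def g4br (K : Type*) [Field K] (x y z : Fin 4 → K) : Fin 4 → K :=
  Matrix.det !![x 1, x 2, x 3; y 1, y 2, y 3; z 1, z 2, z 3] •
    (Pi.single (0 : Fin 4) (1 : K) : Fin 4 → K)

/-!
The bracket of `g₄` takes values in `K e₁` and only sees the last three coordinates, on which it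
is the determinant. Testing the identity on `(e₂, e₃, e₄)` forces `H e₁ ∈ K e₁`, so `H` acts on
the last three coordinates through the lower-right block `B` of its matrix. Then the three cyclic
terms add up to `tr B • [x, y, z]` (`B` acts on the determinant as a derivation) and the last term
is `det B • [x, y, z]`, while the left-hand side is `a₁₁ • [x, y, z]`.
-/

open Matrix

section Determinant

variable {R : Type*} [CommRing R]

theorem Matrix.det_of_mulVec {n : Type*} [Fintype n] [DecidableEq n]
    (B : Matrix n n R) (r : n → n → R) :
    (of fun i => B *ᵥ r i).det = B.det * (of r).det := by
  have : (of fun i => B *ᵥ r i) = of r * Bᵀ := by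
    ext i j
    simp [mulVec, dotProduct, mul_apply, mul_comm]
  rw [this, det_mul, det_transpose, mul_comm]

theorem Matrix.det_fin_three_of_mulVec (B : Matrix (Fin 3) (Fin 3) R) (u v w : Fin 3 → R) :
    (of ![B *ᵥ u, B *ᵥ v, B *ᵥ w]).det = B.det * (of ![u, v, w]).det := by
  rw [← det_of_mulVec]
  congr 1
  ext i j
  fin_cases i <;> rfl

theorem Matrix.det_fin_three_cyclic_mulVec (B : Matrix (Fin 3) (Fin 3) R)
    (u v w : Fin 3 → R) :
    (of ![u, v, B *ᵥ w]).det + (of ![v, w, B *ᵥ u]).det + (of ![w, u, B *ᵥ v]).det =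
      B.trace * (of ![u, v, w]).det := by
  simp [det_fin_three, trace, mulVec, dotProduct, Fin.sum_univ_three]
  ring

end Determinant

theorem Fin.tail_mulVec {R : Type*} [Semiring R] {n : ℕ}
    (a : Matrix (Fin (n + 1)) (Fin (n + 1)) R)
    (ha : ∀ i : Fin n, a i.succ 0 = 0) (x : Fin (n + 1) → R) :
    Fin.tail (a *ᵥ x) = a.submatrix Fin.succ Fin.succ *ᵥ Fin.tail x := by
  ext i
  simp [Fin.tail, mulVec, dotProduct, Fin.sum_univ_succ, ha]

section

variable {K : Type*} [Field K]

theorem g4br_eq_det (x y z : Fin 4 → K) :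
    g4br K x y z = (of ![Fin.tail x, Fin.tail y, Fin.tail z]).det • Pi.single 0 1 := by
  rw [g4br]
  congr 2
  ext i j
  fin_cases i <;> fin_cases j <;> rfl

theorem g4br_apply_succ (x y z : Fin 4 → K) (i : Fin 3) : g4br K x y z i.succ = 0 := by
  simp [g4br]

theorem g4br_single :
    g4br K (Pi.single 1 1) (Pi.single 2 1) (Pi.single 3 1) = Pi.single 0 1 := by
  simp [g4br, det_fin_three]

theorem mulVec_g4br (a : Matrix (Fin 4) (Fin 4) K) (ha : ∀ i : Fin 3, a i.succ 0 = 0)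
    (x y z : Fin 4 → K) : a *ᵥ g4br K x y z = a 0 0 • g4br K x y z := by
  have hcol : a.col 0 = a 0 0 • Pi.single 0 1 := by
    ext i
    cases i using Fin.cases <;> simp [ha]
  rw [g4br, mulVec_smul, mulVec_single_one, hcol, smul_comm]

theorem g4br_mulVec_cyclic_add (a : Matrix (Fin 4) (Fin 4) K)
    (ha : ∀ i : Fin 3, a i.succ 0 = 0)
    (x y z : Fin 4 → K) :
    g4br K x y (a *ᵥ z) + g4br K y z (a *ᵥ x) + g4br K z x (a *ᵥ y) +
        g4br K (a *ᵥ x) (a *ᵥ y) (a *ᵥ z) =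
      ((a.submatrix Fin.succ Fin.succ).trace + (a.submatrix Fin.succ Fin.succ).det) •
        g4br K x y z := by
  simp only [g4br_eq_det, Fin.tail_mulVec a ha, smul_smul, ← add_smul]
  congr 1
  rw [det_fin_three_of_mulVec, add_mul, ← det_fin_three_cyclic_mulVec]

end

/-- The paper's `a_{ij}` is `a (i-1) (j-1)`. -/
theorem g4_crossedHom_iff_general (K : Type*) [Field K]
    (a : Matrix (Fin 4) (Fin 4) K) :
    (∀ x y z : Fin 4 → K,
        Matrix.toLin' a (g4br K x y z) =
          g4br K x y (Matrix.toLin' a z) + g4br K y z (Matrix.toLin' a x) +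
            g4br K z x (Matrix.toLin' a y) +
              g4br K (Matrix.toLin' a x) (Matrix.toLin' a y) (Matrix.toLin' a z)) ↔
      (a 1 0 = 0 ∧ a 2 0 = 0 ∧ a 3 0 = 0 ∧
        a 0 0 = a 1 1 + a 2 2 + a 3 3
          + a 1 2 * a 2 3 * a 3 1 + a 1 3 * a 2 1 * a 3 2 + a 1 1 * a 2 2 * a 3 3
          - a 1 3 * a 2 2 * a 3 1 - a 1 1 * a 2 3 * a 3 2 - a 1 2 * a 2 1 * a 3 3) := by
  have htrace_add_det :
      (a.submatrix Fin.succ Fin.succ).trace + (a.submatrix Fin.succ Fin.succ).det =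
      a 1 1 + a 2 2 + a 3 3
        + a 1 2 * a 2 3 * a 3 1 + a 1 3 * a 2 1 * a 3 2 + a 1 1 * a 2 2 * a 3 3
        - a 1 3 * a 2 2 * a 3 1 - a 1 1 * a 2 3 * a 3 2 - a 1 2 * a 2 1 * a 3 3 := by
    simp [trace, det_fin_three, Fin.sum_univ_three]
    ring
  simp only [toLin'_apply, ← htrace_add_det]
  constructor
  · intro h
    have hbasis := h (Pi.single 1 1) (Pi.single 2 1) (Pi.single 3 1)
    rw [g4br_single] at hbasis
    have ha : ∀ i : Fin 3, a i.succ 0 = 0 := fun i => by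
      simpa [g4br_apply_succ] using congrFun hbasis i.succ
    rw [g4br_mulVec_cyclic_add a ha, g4br_single] at hbasis
    exact ⟨ha 0, ha 1, ha 2, by simpa using congrFun hbasis 0⟩
  · rintro ⟨h1, h2, h3, h0⟩ x y z
    have ha : ∀ i : Fin 3, a i.succ 0 = 0 := by
      intro i; fin_cases i <;> assumption
    rw [mulVec_g4br a ha, g4br_mulVec_cyclic_add a ha, h0]

/-- Let `H : g₄ → g₄` be the linear map with matrix `a` in the
basis `e₁,…,e₄` (so `H eⱼ = Σᵢ aᵢⱼ eᵢ`, i.e. `H = Matrix.toLin' a`; note the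
index shift: the paper's `a_{ij}` is `a (i-1) (j-1)`).  Then `H` is a crossed
homomorphism from `g₄` to itself with respect to the adjoint action
`ad(x,y)z = [x,y,z]` if and only if `a₂₁ = a₃₁ = a₄₁ = 0` and
`a₁₁ = a₂₂ + a₃₃ + a₄₄ + a₂₃a₃₄a₄₂ + a₂₄a₃₂a₄₃ + a₂₂a₃₃a₄₄ − a₂₄a₃₃a₄₂ −
a₂₂a₃₄a₄₃ − a₂₃a₃₂a₄₄`. -/
theorem g4_crossedHom_iff (K : Type*) [Field K] [CharZero K]
    (a : Matrix (Fin 4) (Fin 4) K) :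
    (∀ x y z : Fin 4 → K,
        Matrix.toLin' a (g4br K x y z) =
          g4br K x y (Matrix.toLin' a z) + g4br K y z (Matrix.toLin' a x) +
            g4br K z x (Matrix.toLin' a y) +
              g4br K (Matrix.toLin' a x) (Matrix.toLin' a y) (Matrix.toLin' a z)) ↔
      (a 1 0 = 0 ∧ a 2 0 = 0 ∧ a 3 0 = 0 ∧
        a 0 0 = a 1 1 + a 2 2 + a 3 3
          + a 1 2 * a 2 3 * a 3 1 + a 1 3 * a 2 1 * a 3 2 + a 1 1 * a 2 2 * a 3 3
          - a 1 3 * a 2 2 * a 3 1 - a 1 1 * a 2 3 * a 3 2 - a 1 2 * a 2 1 * a 3 3) :=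
  g4_crossedHom_iff_general K a
end

section
/- Let H : g → h be a crossed homomorphism from a 3-Lie algebra g to a 3-Lie algebra h with respect to an action ρ. Let ψ_g : g → g and ψ_h : h → h be bijective 3-Lie algebra homomorphisms satisfying ψ_h(ρ(x,y)u) = ρ(ψ_g(x), ψ_g(y))(ψ_h(u)) for all x,y ∈ g and u ∈ h. Then the composite ψ_h^{−1} ∘ H ∘ ψ_g : g → h is again a crossed homomorphism from g to h with respect to ρ. -/
/-- A 3-Lie algebra over a field `K`: a `K`-vector space with a trilinear,
totally skew-symmetric bracket satisfying the fundamental identity. -/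
structure ThreeLie (K V : Type*) [Field K] [AddCommGroup V] [Module K V] where
  br : V →ₗ[K] V →ₗ[K] V →ₗ[K] V
  skew₁₂ : ∀ x y z, br x y z = - br y x z
  skew₂₃ : ∀ x y z, br x y z = - br x z y
  fund : ∀ x₁ x₂ x₃ x₄ x₅,
    br x₁ x₂ (br x₃ x₄ x₅) =
      br (br x₁ x₂ x₃) x₄ x₅ + br x₃ (br x₁ x₂ x₄) x₅ + br x₃ x₄ (br x₁ x₂ x₅)

/-- A representation of a 3-Lie algebra `(g, Lg)` on a vector space `V`. -/
structure ThreeLieRep (K g V : Type*) [Field K] [AddCommGroup g] [Module K g]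
    [AddCommGroup V] [Module K V] (Lg : ThreeLie K g) where
  ρ : g →ₗ[K] g →ₗ[K] (V →ₗ[K] V)
  skew : ∀ x y, ρ x y = - ρ y x
  rep₁ : ∀ x₁ x₂ x₃ x₄,
    ρ x₁ x₂ ∘ₗ ρ x₃ x₄ =
      ρ (Lg.br x₁ x₂ x₃) x₄ + ρ x₃ (Lg.br x₁ x₂ x₄) + ρ x₃ x₄ ∘ₗ ρ x₁ x₂
  rep₂ : ∀ x₁ x₂ x₃ x₄,
    ρ x₁ (Lg.br x₂ x₃ x₄) =
      ρ x₃ x₄ ∘ₗ ρ x₁ x₂ - ρ x₂ x₄ ∘ₗ ρ x₁ x₃ + ρ x₂ x₃ ∘ₗ ρ x₁ x₄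

/-- An action of a 3-Lie algebra `(g, Lg)` on a 3-Lie algebra `(h, Lh)`:
a representation of `g` on `h` all of whose values are central in `h`
and which kills brackets of `h`. -/
structure ThreeLieAction (K g h : Type*) [Field K] [AddCommGroup g] [Module K g]
    [AddCommGroup h] [Module K h] (Lg : ThreeLie K g) (Lh : ThreeLie K h)
    extends ThreeLieRep K g h Lg where
  central : ∀ x y u v w, Lh.br (ρ x y u) v w = 0
  annih : ∀ x y u v w, ρ x y (Lh.br u v w) = 0

/-- `H : g → h` is a crossed homomorphism with respect to the action `A`. -/
def IsCrossedHom {K g h : Type*} [Field K] [AddCommGroup g] [Module K g]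
    [AddCommGroup h] [Module K h] {Lg : ThreeLie K g} {Lh : ThreeLie K h}
    (A : ThreeLieAction K g h Lg Lh) (H : g →ₗ[K] h) : Prop :=
  ∀ x y z, H (Lg.br x y z) =
    A.ρ x y (H z) + A.ρ y z (H x) + A.ρ z x (H y) + Lh.br (H x) (H y) (H z)

/-- If `H : g → h` is a crossed homomorphism with respect to an
action `A`, and `ψg : g ≃ g`, `ψh : h ≃ h` are bijective 3-Lie algebra
homomorphisms satisfying `ψh (ρ(x,y)u) = ρ(ψg x, ψg y)(ψh u)`, then
`ψh⁻¹ ∘ H ∘ ψg` is again a crossed homomorphism with respect to `A`. -/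
theorem conjugate_crossedHom
    (K g h : Type*) [Field K] [CharZero K] [AddCommGroup g] [Module K g]
    [AddCommGroup h] [Module K h] (Lg : ThreeLie K g) (Lh : ThreeLie K h)
    (A : ThreeLieAction K g h Lg Lh) (H : g →ₗ[K] h) (hH : IsCrossedHom A H)
    (ψg : g ≃ₗ[K] g) (ψh : h ≃ₗ[K] h)
    (hψg : ∀ x y z, ψg (Lg.br x y z) = Lg.br (ψg x) (ψg y) (ψg z))
    (hψh : ∀ u v w, ψh (Lh.br u v w) = Lh.br (ψh u) (ψh v) (ψh w))
    (hcompat : ∀ x y u, ψh (A.ρ x y u) = A.ρ (ψg x) (ψg y) (ψh u)) :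
    IsCrossedHom A (ψh.symm.toLinearMap ∘ₗ H ∘ₗ ψg.toLinearMap) := by
  intro x y z
  apply ψh.injective
  simp only [LinearMap.comp_apply, LinearEquiv.coe_coe]
  rw [ψh.apply_symm_apply, hψg, hH]
  rw [map_add, map_add, map_add, hψh, hcompat, hcompat, hcompat]
  simp
end

section
/- Let ρ be an action of a 3-Lie algebra (g,[·,·,·]_g) on a 3-Lie algebra (h,[·,·,·]_h). An invertible linear map H : g → h is a crossed homomorphism with respect to ρ if and only if its inverse H^{−1} : h → g is a relative Rota–Baxter operator of weight 1 from h to g with respect to ρ, i.e., [H^{−1}u, H^{−1}v, H^{−1}w]_g = H^{−1}( ρ(H^{−1}u, H^{−1}v)w + ρ(H^{−1}v, H^{−1}w)u + ρ(H^{−1}w, H^{−1}u)v + [u,v,w]_h ) for all u,v,w ∈ h. -/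
/-- An invertible linear map `H : g → h` is a crossed homomorphism
with respect to an action `A` if and only if `H⁻¹ : h → g` is a relative
Rota–Baxter operator of weight `1` from `h` to `g` with respect to `A`. -/
theorem crossedHom_iff_inv_relRotaBaxter
    (K g h : Type*) [Field K] [CharZero K] [AddCommGroup g] [Module K g]
    [AddCommGroup h] [Module K h] (Lg : ThreeLie K g) (Lh : ThreeLie K h)
    (A : ThreeLieAction K g h Lg Lh) (H : g ≃ₗ[K] h) :
    IsCrossedHom A H.toLinearMap ↔
      ∀ u v w : h,
        Lg.br (H.symm u) (H.symm v) (H.symm w) =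
          H.symm (A.ρ (H.symm u) (H.symm v) w + A.ρ (H.symm v) (H.symm w) u +
            A.ρ (H.symm w) (H.symm u) v + (1 : K) • Lh.br u v w) := by
  constructor
  · intro hH u v w
    rw [LinearEquiv.eq_symm_apply]
    have := hH (H.symm u) (H.symm v) (H.symm w)
    simp only [LinearEquiv.coe_coe, LinearEquiv.apply_symm_apply] at this
    rw [this]; simp
  · intro hT x y z
    have := hT (H x) (H y) (H z)
    simp only [LinearEquiv.symm_apply_apply] at this
    rw [LinearEquiv.eq_symm_apply] at this
    simpa using this
end

section
/- Let H be a crossed homomorphism from a 3-Lie algebra (g,[·,·,·]_g) to a 3-Lie algebra (h,[·,·,·]_h) with respect to an action ρ. Define ρ_H : g×g → End(h) by ρ_H(x,y)u = ρ(x,y)u + [Hx,Hy,u]_h. Then ρ_H is a representation of g on the vector space h; that is, ρ_H is bilinear, ρ_H(x,y) = −ρ_H(y,x), and for all x1,x2,x3,x4 ∈ g: ρ_H(x1,x2)ρ_H(x3,x4) = ρ_H([x1,x2,x3]_g,x4) + ρ_H(x3,[x1,x2,x4]_g) + ρ_H(x3,x4)ρ_H(x1,x2), and ρ_H(x1,[x2,x3,x4]_g)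 = ρ_H(x3,x4)ρ_H(x1,x2) − ρ_H(x2,x4)ρ_H(x1,x3) + ρ_H(x2,x3)ρ_H(x1,x4). -/
section Aux

variable {K V : Type*} [Field K] [AddCommGroup V] [Module K V] (L : ThreeLie K V)

/-- Cyclic invariance of a 3-Lie bracket. -/
lemma ThreeLie.cyc (a b c : V) : L.br a b c = L.br b c a := by
  rw [L.skew₁₂ a b c, L.skew₂₃ b a c, neg_neg]

/-- Second representation identity for the adjoint action, a consequence of
the fundamental identity. -/
lemma ThreeLie.adrep₂ (x₁ x₂ x₃ x₄ u : V) :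
    L.br x₁ (L.br x₂ x₃ x₄) u =
      L.br x₃ x₄ (L.br x₁ x₂ u) - L.br x₂ x₄ (L.br x₁ x₃ u)
        + L.br x₂ x₃ (L.br x₁ x₄ u) := by
  have h := L.fund u x₁ x₂ x₃ x₄
  rw [L.cyc u x₁ (L.br x₂ x₃ x₄), L.cyc (L.br u x₁ x₂) x₃ x₄, L.cyc u x₁ x₂,
    L.skew₂₃ x₂ (L.br u x₁ x₃) x₄, L.cyc u x₁ x₃, L.cyc u x₁ x₄] at h
  rw [h]; abel

end Aux

section Aux2

variable {K g h : Type*} [Field K] [AddCommGroup g] [Module K g]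
  [AddCommGroup h] [Module K h] {Lg : ThreeLie K g} {Lh : ThreeLie K h}
  (A : ThreeLieAction K g h Lg Lh)

lemma ThreeLieAction.central₂ (x y : g) (u v w : h) :
    Lh.br v (A.ρ x y u) w = 0 := by
  rw [Lh.skew₁₂, A.central, neg_zero]

lemma ThreeLieAction.central₃ (x y : g) (u v w : h) :
    Lh.br v w (A.ρ x y u) = 0 := by
  rw [Lh.skew₂₃, A.central₂, neg_zero]

end Aux2

/-- If `H` is a crossed homomorphism from `(g, Lg)` to `(h, Lh)`
with respect to an action `A`, then `ρ_H(x,y)u = ρ(x,y)u + [Hx,Hy,u]_h` is a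
representation of `g` on the vector space `h`: it is bilinear, skew-symmetric in
`(x,y)` and satisfies the two representation identities. -/
theorem crossedHom_induced_rep
    (K g h : Type*) [Field K] [CharZero K] [AddCommGroup g] [Module K g]
    [AddCommGroup h] [Module K h] (Lg : ThreeLie K g) (Lh : ThreeLie K h)
    (A : ThreeLieAction K g h Lg Lh) (H : g →ₗ[K] h) (hH : IsCrossedHom A H) :
    ∃ R : ThreeLieRep K g h Lg,
      ∀ x y u, R.ρ x y u = A.ρ x y u + Lh.br (H x) (H y) u := by
  -- the induced bilinear map
  set ρH : g →ₗ[K] g →ₗ[K] (h →ₗ[K] h) :=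
    LinearMap.mk₂ K (fun x y => A.ρ x y + Lh.br (H x) (H y))
      (by intro m₁ m₂ n; ext u; simp [map_add]; abel)
      (by intro c m n; ext u; simp [map_smul, smul_add])
      (by intro m n₁ n₂; ext u; simp [map_add]; abel)
      (by intro c m n; ext u; simp [map_smul, smul_add]) with hρH
  have hap : ∀ x y (u : h), ρH x y u = A.ρ x y u + Lh.br (H x) (H y) u := by
    intro x y u; simp [hρH]
  have hcr : ∀ x y z, H (Lg.br x y z) =
      A.ρ x y (H z) + A.ρ y z (H x) + A.ρ z x (H y) + Lh.br (H x) (H y) (H z) := hH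
  refine ⟨⟨ρH, ?_, ?_, ?_⟩, hap⟩
  · -- skew
    intro x y
    ext u
    simp only [hap, LinearMap.neg_apply]
    rw [A.skew x y, Lh.skew₁₂ (H x) (H y) u]
    simp only [LinearMap.neg_apply]
    abel
  · -- rep₁
    intro x₁ x₂ x₃ x₄
    ext u
    have h1 := LinearMap.congr_fun (A.rep₁ x₁ x₂ x₃ x₄) u
    have h2 := Lh.fund (H x₁) (H x₂) (H x₃) (H x₄) u
    simp only [LinearMap.comp_apply, LinearMap.add_apply] at h1 ⊢
    simp only [hap, map_add, LinearMap.add_apply, hcr, A.annih, A.central,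
      A.central₂, A.central₃, map_zero, LinearMap.zero_apply, add_zero, zero_add]
    rw [h1, h2]
    abel
  · -- rep₂
    intro x₁ x₂ x₃ x₄
    ext u
    have h1 := LinearMap.congr_fun (A.rep₂ x₁ x₂ x₃ x₄) u
    have h2 := Lh.adrep₂ (H x₁) (H x₂) (H x₃) (H x₄) u
    simp only [LinearMap.comp_apply, LinearMap.add_apply, LinearMap.sub_apply] at h1 ⊢
    simp only [hap, map_add, LinearMap.add_apply, hcr, A.annih, A.central,
      A.central₂, A.central₃, map_zero, LinearMap.zero_apply, add_zero, zero_add]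
    rw [h1, h2]
    abel
end

section
/- Let H be a crossed homomorphism from a 3-Lie algebra g to a 3-Lie algebra h with respect to an action ρ, and fix x, y ∈ g. Define f : g → h by f(z) = ρ(y,z)(Hx) + ρ(z,x)(Hy) + [Hx,Hy,Hz]_h. Then f is a 1-cocycle of g with coefficients in the representation ρ_H, i.e., for all x1,x2,x3 ∈ g: f([x1,x2,x3]_g) = ρ_H(x1,x2)f(x3) + ρ_H(x2,x3)f(x1) + ρ_H(x3,x1)f(x2), where ρ_H(a,b)v = ρ(a,b)v + [Ha,Hb,v]_h. -/
/-- Let `H` be a crossed homomorphism with respect to an action `A`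
and fix `x, y ∈ g`.  The map `f : z ↦ ρ(y,z)(Hx) + ρ(z,x)(Hy) + [Hx,Hy,Hz]_h` is a
1-cocycle of `g` with coefficients in the representation
`ρ_H(a,b)v = ρ(a,b)v + [Ha,Hb,v]_h`. -/
theorem crossedHom_delta_one_cocycle
    (K g h : Type*) [Field K] [CharZero K] [AddCommGroup g] [Module K g]
    [AddCommGroup h] [Module K h] (Lg : ThreeLie K g) (Lh : ThreeLie K h)
    (A : ThreeLieAction K g h Lg Lh) (H : g →ₗ[K] h) (hH : IsCrossedHom A H)
    (x y : g) (f : g → h)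
    (hf : ∀ z, f z = A.ρ y z (H x) + A.ρ z x (H y) + Lh.br (H x) (H y) (H z)) :
    ∀ x₁ x₂ x₃ : g,
      f (Lg.br x₁ x₂ x₃) =
        (A.ρ x₁ x₂ (f x₃) + Lh.br (H x₁) (H x₂) (f x₃)) +
        (A.ρ x₂ x₃ (f x₁) + Lh.br (H x₂) (H x₃) (f x₁)) +
        (A.ρ x₃ x₁ (f x₂) + Lh.br (H x₃) (H x₁) (f x₂)) := by

  intro x₁ x₂ x₃
  -- rotate lemma for the bracket of h
  have rot : ∀ u v p : h, Lh.br u v p = Lh.br p u v := by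
    intro u v p
    rw [Lh.skew₂₃ u v p, Lh.skew₁₂ u p v, neg_neg]
  have central₃ : ∀ (a b : g) (w u v : h), Lh.br u v (A.ρ a b w) = 0 := by
    intro a b w u v
    rw [rot]; exact A.central a b w u v
  have skewρ : ∀ (a b : g) (w : h), A.ρ a b w = - A.ρ b a w := by
    intro a b w
    rw [A.skew]; simp
  -- pointwise version of rep₂
  have r2 : ∀ (a b c d : g) (w : h),
      A.ρ a (Lg.br b c d) w =
        A.ρ c d (A.ρ a b w) - A.ρ b d (A.ρ a c w) + A.ρ b c (A.ρ a d w) := by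
    intro a b c d w
    have := LinearMap.ext_iff.mp (A.rep₂ a b c d) w
    simpa using this
  simp only [hf, hH x₁ x₂ x₃, map_add]
  simp only [central₃, A.annih, add_zero, zero_add, map_zero]
  rw [r2 y x₁ x₂ x₃ (H x)]
  rw [show A.ρ (Lg.br x₁ x₂ x₃) x (H y) = - A.ρ x (Lg.br x₁ x₂ x₃) (H y) from skewρ _ _ _]
  rw [r2 x x₁ x₂ x₃ (H y)]
  rw [Lh.fund (H x) (H y) (H x₁) (H x₂) (H x₃)]
  rw [show Lh.br (Lh.br (H x) (H y) (H x₁)) (H x₂) (H x₃)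
        = Lh.br (H x₂) (H x₃) (Lh.br (H x) (H y) (H x₁)) from (rot _ _ _).symm]
  rw [show Lh.br (H x₁) (Lh.br (H x) (H y) (H x₂)) (H x₃)
        = Lh.br (H x₃) (H x₁) (Lh.br (H x) (H y) (H x₂)) from by
      rw [Lh.skew₁₂, rot, Lh.skew₂₃, neg_neg]]
  rw [show A.ρ x₁ x₃ (A.ρ y x₂ (H x)) = - A.ρ x₃ x₁ (A.ρ y x₂ (H x)) from skewρ _ _ _]
  rw [show A.ρ x₁ x₃ (A.ρ x x₂ (H y)) = - A.ρ x₃ x₁ (A.ρ x x₂ (H y)) from skewρ _ _ _]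
  simp only [show ∀ k : g, A.ρ x k (H y) = - A.ρ k x (H y) from fun k => skewρ _ _ _,
    map_neg, neg_neg]
  abel
end

section
/- Let H and H' be crossed homomorphisms from a 3-Lie algebra g to a 3-Lie algebra h with respect to an action ρ. Suppose ψ_g : g → g and ψ_h : h → h are 3-Lie algebra homomorphisms with ψ_g bijective, ψ_h ∘ H = H' ∘ ψ_g, and ψ_h(ρ(x,y)u) = ρ(ψ_g(x), ψ_g(y))(ψ_h(u)) for all x,y ∈ g, u ∈ h. For an n-cochain ω, define the n-cochain p(ω) by p(ω)(X_1,…,X_{n−1}, z) = ψ_h( ω((ψ_g^{−1}x_1, ψ_g^{−1}y_1),…,(ψ_g^{−1}x_{n−1}, ψ_g^{−1}y_{n−1}), ψ_g^{−1}z) ), where X_i = (x_i,y_i). Then for every n ≥ 1 and every n-cochain ω one has d_{ρ_{H'}}(p(ω)) = p(d_{ρ_H}(ω)); i.e., p is a cochain map from the complex of H to the complex of H'. -/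
section Cochains

variable {K g h : Type*} [Field K] [AddCommGroup g] [Module K g]
  [AddCommGroup h] [Module K h]

/-- A cochain of the 3-Lie algebra `g` with coefficients in `h` with `m` pairs of
`g`-arguments and one final `g`-argument (an `(m+1)`-cochain in the numbering of the
paper): it is linear in each of the `2m+1` vector arguments and antisymmetric under
swapping the two entries within each pair. -/
def IsCochain (K : Type*) [Field K] {g h : Type*} [AddCommGroup g] [Module K g]
    [AddCommGroup h] [Module K h] {m : ℕ}
    (f : (Fin m → g × g) → g → h) : Prop :=
  (∀ (X : Fin m → g × g) (i : Fin m) (x x' y : g) (z : g),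
      f (Function.update X i (x + x', y)) z =
        f (Function.update X i (x, y)) z + f (Function.update X i (x', y)) z) ∧
  (∀ (X : Fin m → g × g) (i : Fin m) (c : K) (x y : g) (z : g),
      f (Function.update X i (c • x, y)) z = c • f (Function.update X i (x, y)) z) ∧
  (∀ (X : Fin m → g × g) (i : Fin m) (x y y' : g) (z : g),
      f (Function.update X i (x, y + y')) z =
        f (Function.update X i (x, y)) z + f (Function.update X i (x, y')) z) ∧
  (∀ (X : Fin m → g × g) (i : Fin m) (c : K) (x y : g) (z : g),
      f (Function.update X i (x, c • y)) z = c • f (Function.update X i (x, y)) z) ∧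
  (∀ (X : Fin m → g × g) (z z' : g), f X (z + z') = f X z + f X z') ∧
  (∀ (X : Fin m → g × g) (c : K) (z : g), f X (c • z) = c • f X z) ∧
  (∀ (X : Fin m → g × g) (i : Fin m) (x y : g) (z : g),
      f (Function.update X i (x, y)) z = - f (Function.update X i (y, x)) z)

/-- The coboundary operator of the 3-Lie algebra `g` (with bracket `br`) with
coefficients given by the map `ρ' : g → g → h → h` (in our application,
`ρ' = ρ_H`), sending a cochain with `m` pairs to a cochain with `m + 1` pairs. -/
def coboundary {m : ℕ} (br : g → g → g → g) (ρ' : g → g → h → h)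
    (f : (Fin m → g × g) → g → h) : (Fin (m + 1) → g × g) → g → h := fun X z =>
  (∑ j : Fin (m + 1), ∑ k : Fin (m + 1),
      if j < k then
        (-1 : ℤ) ^ (j.val + 1) •
          (f ((Function.update X k (br (X j).1 (X j).2 (X k).1, (X k).2)) ∘ j.succAbove) z
           + f ((Function.update X k ((X k).1, br (X j).1 (X j).2 (X k).2)) ∘ j.succAbove) z)
      else 0)
  + ∑ j : Fin (m + 1), (-1 : ℤ) ^ (j.val + 1) • f (X ∘ j.succAbove) (br (X j).1 (X j).2 z)
  + ∑ j : Fin (m + 1), (-1 : ℤ) ^ j.val • ρ' (X j).1 (X j).2 (f (X ∘ j.succAbove) z)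
  + (-1 : ℤ) ^ m •
      (ρ' (X (Fin.last m)).2 z (f (X ∘ (Fin.last m).succAbove) (X (Fin.last m)).1)
       + ρ' z (X (Fin.last m)).1 (f (X ∘ (Fin.last m).succAbove) (X (Fin.last m)).2))

end Cochains

/-! The coboundary is built from the bracket of `g` and the operator `ρ_H` alone, so transporting
cochains along the bracket-preserving `ψg⁻¹` and the additive `ψh` commutes with it once `ψh`
intertwines `ρ_H` with `ρ_{H'}`, which follows from `ψh ∘ H = H' ∘ ψg`. -/

section Transport

variable {g g' h h' : Type*} [AddCommGroup h] [AddCommGroup h'] {m : ℕ}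

def transportCochain (φ : g' → g) (ψ : h →+ h') (f : (Fin m → g × g) → g → h) :
    (Fin m → g' × g') → g' → h' :=
  fun X z => ψ (f (Prod.map φ φ ∘ X) (φ z))

theorem coboundary_transportCochain (br : g → g → g → g) (br' : g' → g' → g' → g')
    (ρ : g → g → h → h) (ρ' : g' → g' → h' → h') (φ : g' → g) (ψ : h →+ h')
    (hφ : ∀ x y z, φ (br' x y z) = br (φ x) (φ y) (φ z))
    (hψ : ∀ x y u, ψ (ρ (φ x) (φ y) u) = ρ' x y (ψ u))
    (f : (Fin m → g × g) → g → h) :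
    coboundary br' ρ' (transportCochain φ ψ f) =
      transportCochain φ ψ (coboundary br ρ f) := by
  funext X z
  simp only [coboundary, transportCochain, map_add, map_sum, map_zsmul, apply_ite ψ, map_zero,
    Function.comp_update, ← Function.comp_assoc, Function.comp_apply, Prod.map, hφ, hψ]

end Transport

theorem crossedHom_cochain_map_general
    (K g h : Type*) [Field K] [AddCommGroup g] [Module K g]
    [AddCommGroup h] [Module K h] (Lg : ThreeLie K g) (Lh : ThreeLie K h)
    (A : ThreeLieAction K g h Lg Lh) (H H' : g →ₗ[K] h)
    (ψg : g ≃ₗ[K] g) (ψh : h →ₗ[K] h)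
    (hψg : ∀ x y z, ψg (Lg.br x y z) = Lg.br (ψg x) (ψg y) (ψg z))
    (hψh : ∀ u v w, ψh (Lh.br u v w) = Lh.br (ψh u) (ψh v) (ψh w))
    (hcomm : ∀ x, ψh (H x) = H' (ψg x))
    (hcompat : ∀ x y u, ψh (A.ρ x y u) = A.ρ (ψg x) (ψg y) (ψh u))
    (m : ℕ) (ω : (Fin m → g × g) → g → h) :
    coboundary (fun x y z => Lg.br x y z)
        (fun x y u => A.ρ x y u + Lh.br (H' x) (H' y) u)
        (fun X z => ψh (ω (fun i => (ψg.symm (X i).1, ψg.symm (X i).2)) (ψg.symm z)))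
      = fun X z =>
          ψh (coboundary (fun x y z => Lg.br x y z)
                (fun x y u => A.ρ x y u + Lh.br (H x) (H y) u) ω
              (fun i => (ψg.symm (X i).1, ψg.symm (X i).2)) (ψg.symm z)) := by
  have hψg_symm : ∀ x y z, ψg.symm (Lg.br x y z) = Lg.br (ψg.symm x) (ψg.symm y) (ψg.symm z) :=
    fun x y z => ψg.injective <| by simp only [hψg, LinearEquiv.apply_symm_apply]
  have hψh_rho : ∀ x y u,
      ψh (A.ρ (ψg.symm x) (ψg.symm y) u + Lh.br (H (ψg.symm x)) (H (ψg.symm y)) u) =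
        A.ρ x y (ψh u) + Lh.br (H' x) (H' y) (ψh u) := by
    intro x y u
    simp only [map_add, hcompat, hψh, hcomm, LinearEquiv.apply_symm_apply]
  exact coboundary_transportCochain _ _ _ _ ψg.symm ψh.toAddMonoidHom hψg_symm hψh_rho ω

/-- Let `H, H'` be crossed homomorphisms from `g` to `h` with
respect to an action `A`, and let `(ψg, ψh)` be a homomorphism from `H` to `H'`
with `ψg` bijective.  Then the map `p` sending a cochain `ω` to
`p(ω)(X₁,…,Xₘ,z) = ψh (ω(ψg⁻¹X₁,…,ψg⁻¹Xₘ, ψg⁻¹z))` is a cochain map from the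
complex of `H` (with coboundary `d_{ρ_H}`) to the complex of `H'` (with
coboundary `d_{ρ_{H'}}`). -/
theorem crossedHom_cochain_map
    (K g h : Type*) [Field K] [CharZero K] [AddCommGroup g] [Module K g]
    [AddCommGroup h] [Module K h] (Lg : ThreeLie K g) (Lh : ThreeLie K h)
    (A : ThreeLieAction K g h Lg Lh) (H H' : g →ₗ[K] h)
    (hH : IsCrossedHom A H) (hH' : IsCrossedHom A H')
    (ψg : g ≃ₗ[K] g) (ψh : h →ₗ[K] h)
    (hψg : ∀ x y z, ψg (Lg.br x y z) = Lg.br (ψg x) (ψg y) (ψg z))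
    (hψh : ∀ u v w, ψh (Lh.br u v w) = Lh.br (ψh u) (ψh v) (ψh w))
    (hcomm : ∀ x, ψh (H x) = H' (ψg x))
    (hcompat : ∀ x y u, ψh (A.ρ x y u) = A.ρ (ψg x) (ψg y) (ψh u))
    (m : ℕ) (ω : (Fin m → g × g) → g → h) (hω : IsCochain K ω) :
    coboundary (fun x y z => Lg.br x y z)
        (fun x y u => A.ρ x y u + Lh.br (H' x) (H' y) u)
        (fun X z => ψh (ω (fun i => (ψg.symm (X i).1, ψg.symm (X i).2)) (ψg.symm z)))
      = fun X z =>
          ψh (coboundary (fun x y z => Lg.br x y z)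
                (fun x y u => A.ρ x y u + Lh.br (H x) (H y) u) ω
              (fun i => (ψg.symm (X i).1, ψg.symm (X i).2)) (ψg.symm z)) :=
  crossedHom_cochain_map_general K g h Lg Lh A H H' ψg ψh hψg hψh hcomm hcompat m ω
end

section
/- Let H be a crossed homomorphism from a 3-Lie algebra g to a 3-Lie algebra h with respect to an action ρ, and let ℌ : g → h be a linear map. Then H + tℌ is a crossed homomorphism modulo t² (i.e., the K[t]/(t²)-linear extension of H + tℌ is a crossed homomorphism from the scalar extension of g to the scalar extension of h with respect to the extended action) if and only if ℌ([x,y,z]_g) = ρ(x,y)ℌ(z) + ρ(y,z)ℌ(x) + ρ(z,x)ℌ(y) + [ℌ(x),Hy,Hz]_h + [Hx,ℌ(y),Hz]_h + [Hx,Hy,ℌ(z)]_h for all x,y,z ∈ g; in that case ℌ is said to generate an infinitesimal deformation of H, and this condition says ℌ is a 2-cocycle of the crossed homomorphism H. -/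
section DualNumberExtension

variable {V W : Type*}

/- We model the scalar extension `K[t]/(t²) ⊗_K V` of a `K`-vector space `V` by
`V × V`, identifying `(a, b)` with `a + t·b`. -/

/-- The `K[t]/(t²)`-trilinear extension of a trilinear bracket to the scalar
extension, computed modulo `t²`. -/
def extTri [AddCommGroup V] (br : V → V → V → V) (X Y Z : V × V) : V × V :=
  (br X.1 Y.1 Z.1, br X.2 Y.1 Z.1 + br X.1 Y.2 Z.1 + br X.1 Y.1 Z.2)

/-- The extension of an action `ρ` to the scalar extensions, modulo `t²`. -/
def extRho [AddCommGroup V] [AddCommGroup W] (ρ' : V → V → W → W)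
    (X Y : V × V) (U : W × W) : W × W :=
  (ρ' X.1 Y.1 U.1, ρ' X.2 Y.1 U.1 + ρ' X.1 Y.2 U.1 + ρ' X.1 Y.1 U.2)

/-- The `K[t]/(t²)`-linear extension of `H + tℌ` to the scalar extensions:
`x + t·x' ↦ Hx + t(ℌx + Hx')`. -/
def extMap [AddCommGroup V] [AddCommGroup W] (H Hd : V → W) (X : V × V) : W × W :=
  (H X.1, Hd X.1 + H X.2)

end DualNumberExtension

/-- Let `H` be a crossed homomorphism from `g` to `h` with respect
to an action `A`, and `ℌ : g → h` a linear map.  Then `H + tℌ` is a crossed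
homomorphism modulo `t²` (i.e. its `K[t]/(t²)`-linear extension is a crossed
homomorphism between the scalar extensions, with respect to the extended action)
if and only if `ℌ` is a 2-cocycle of `H`:
`ℌ[x,y,z] = ρ(x,y)ℌz + ρ(y,z)ℌx + ρ(z,x)ℌy + [ℌx,Hy,Hz] + [Hx,ℌy,Hz] + [Hx,Hy,ℌz]`. -/
theorem infinitesimal_deformation_iff_two_cocycle
    (K g h : Type*) [Field K] [CharZero K] [AddCommGroup g] [Module K g]
    [AddCommGroup h] [Module K h] (Lg : ThreeLie K g) (Lh : ThreeLie K h)
    (A : ThreeLieAction K g h Lg Lh) (H : g →ₗ[K] h) (hH : IsCrossedHom A H)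
    (Hd : g →ₗ[K] h) :
    (∀ X Y Z : g × g,
        extMap H Hd (extTri (fun x y z => Lg.br x y z) X Y Z) =
          extRho (fun x y u => A.ρ x y u) X Y (extMap H Hd Z) +
          extRho (fun x y u => A.ρ x y u) Y Z (extMap H Hd X) +
          extRho (fun x y u => A.ρ x y u) Z X (extMap H Hd Y) +
          extTri (fun u v w => Lh.br u v w)
            (extMap H Hd X) (extMap H Hd Y) (extMap H Hd Z)) ↔
      (∀ x y z : g,
        Hd (Lg.br x y z) =
          A.ρ x y (Hd z) + A.ρ y z (Hd x) + A.ρ z x (Hd y) +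
          Lh.br (Hd x) (H y) (H z) + Lh.br (H x) (Hd y) (H z) +
          Lh.br (H x) (H y) (Hd z)) := by
  constructor
  · intro hA x y z
    have h2 := congrArg Prod.snd (hA (x, 0) (y, 0) (z, 0))
    simp [extMap, extTri, extRho] at h2
    rw [h2]; abel
  · intro hc X Y Z
    obtain ⟨x1, x2⟩ := X; obtain ⟨y1, y2⟩ := Y; obtain ⟨z1, z2⟩ := Z
    refine Prod.ext ?_ ?_
    · simpa [extMap, extTri, extRho] using hH x1 y1 z1
    · simp only [extMap, extTri, extRho, Prod.mk_add_mk, map_add, LinearMap.add_apply]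
      rw [hc x1 y1 z1, hH x2 y1 z1, hH x1 y2 z1, hH x1 y1 z2]
      abel
end

section
/- Let H be a crossed homomorphism from a 3-Lie algebra g to a 3-Lie algebra h with respect to an action ρ, let ℌ1, ℌ2 : g → h be linear maps generating infinitesimal deformations H + tℌ1 and H + tℌ2 of H, and let x, y ∈ g be such that for all z ∈ g: ρ(x,y)(Hz) + ℌ1(z) = H([x,y,z]_g) + ℌ2(z) (this is the t-linear part of the condition that the pair (Id_g + t·ad(x,y), Id_h + t·ρ(x,y)) intertwines H + tℌ1 and H + tℌ2 modulo t²). Then for all z ∈ g: ℌ1(z) − ℌ2(z) = ρ(y,z)(Hx) + ρ(z,x)(Hy) + [Hx,Hy,Hz]_h; in other words, ℌ1 − ℌ2 is the 1-coboundary ∂(x∧y), so equivalent infinitesimal deformations define the same class in the second cohomology group of H. -/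
/-- Let `H` be a crossed homomorphism with respect to an action
`A`, and let `ℌ₁, ℌ₂` generate infinitesimal deformations of `H`.  Suppose `x, y ∈ g`
satisfy the intertwining condition `ρ(x,y)(Hz) + ℌ₁z = H[x,y,z] + ℌ₂z` for all `z`
(the `t`-linear part of the condition that `(Id + t·ad(x,y), Id + t·ρ(x,y))` is a
homomorphism from `H + tℌ₁` to `H + tℌ₂` modulo `t²`).  Then
`ℌ₁ z − ℌ₂ z = ρ(y,z)(Hx) + ρ(z,x)(Hy) + [Hx,Hy,Hz]_h`, i.e. `ℌ₁ − ℌ₂` is the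
1-coboundary `∂(x∧y)`, so the two deformations have the same class in `H²_H(g;h)`. -/
theorem equivalent_deformations_cohomologous
    (K g h : Type*) [Field K] [CharZero K] [AddCommGroup g] [Module K g]
    [AddCommGroup h] [Module K h] (Lg : ThreeLie K g) (Lh : ThreeLie K h)
    (A : ThreeLieAction K g h Lg Lh) (H : g →ₗ[K] h) (hH : IsCrossedHom A H)
    (Hd₁ Hd₂ : g →ₗ[K] h)
    (h₁ : ∀ x y z, Hd₁ (Lg.br x y z) =
      A.ρ x y (Hd₁ z) + A.ρ y z (Hd₁ x) + A.ρ z x (Hd₁ y) +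
      Lh.br (Hd₁ x) (H y) (H z) + Lh.br (H x) (Hd₁ y) (H z) + Lh.br (H x) (H y) (Hd₁ z))
    (h₂ : ∀ x y z, Hd₂ (Lg.br x y z) =
      A.ρ x y (Hd₂ z) + A.ρ y z (Hd₂ x) + A.ρ z x (Hd₂ y) +
      Lh.br (Hd₂ x) (H y) (H z) + Lh.br (H x) (Hd₂ y) (H z) + Lh.br (H x) (H y) (Hd₂ z))
    (x y : g)
    (hequiv : ∀ z, A.ρ x y (H z) + Hd₁ z = H (Lg.br x y z) + Hd₂ z) :
    ∀ z, Hd₁ z - Hd₂ z =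
      A.ρ y z (H x) + A.ρ z x (H y) + Lh.br (H x) (H y) (H z) := by
  intro z
  have h := hequiv z
  rw [hH x y z] at h
  linear_combination (norm := abel) h
end

section
/- Let ρ be an action of a 3-Lie algebra g on a 3-Lie algebra h, let H : g → h be a crossed homomorphism with respect to ρ, let D be the semidirect product bracket on E = g ⊕ h, and let H̃ ∈ End(E) be given by H̃(x,u) = (0, Hx). Then the iterated Nijenhuis–Richardson derived bracket satisfies [[D,H̃],H̃]((x,u),(y,v),(z,w)) = 2·(0, [Hx,Hy,w]_h + [Hx,v,Hz]_h + [u,Hy,Hz]_h) for all x,y,z ∈ g and u,v,w ∈ h. -/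
/-- The Nijenhuis–Richardson derived bracket of a trilinear map `T` with a linear
(0-cochain) map `L`:
`[T,L](a,b,c) = T(La,b,c) + T(a,Lb,c) + T(a,b,Lc) − L(T(a,b,c))`. -/
def nrBr {E : Type*} [AddCommGroup E] (T : E → E → E → E) (L : E → E) :
    E → E → E → E := fun a b c =>
  T (L a) b c + T a (L b) c + T a b (L c) - L (T a b c)

/-- The semidirect product bracket `D` on `E = g × h` induced by an action. -/
def sdBr {K g h : Type*} [Field K] [AddCommGroup g] [Module K g]
    [AddCommGroup h] [Module K h] {Lg : ThreeLie K g} {Lh : ThreeLie K h}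
    (A : ThreeLieAction K g h Lg Lh) (x y z : g × h) : g × h :=
  (Lg.br x.1 y.1 z.1,
    A.ρ x.1 y.1 z.2 + A.ρ y.1 z.1 x.2 + A.ρ z.1 x.1 y.2 + Lh.br x.2 y.2 z.2)

/-!
Write `H̃(x,u) = (0, Hx)`. Expanding the definitions, the first derived bracket is
`[D,H̃]((x,u),(y,v),(z,w)) = (0, δ(x,y,z) + [Hx,v,w] + [u,Hy,w] + [u,v,Hz])`, where
`δ(x,y,z) = ρ(x,y)Hz + ρ(y,z)Hx + ρ(z,x)Hy − H[x,y,z]` is trilinear. In the second bracket,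
`H̃` kills every value of `[D,H̃]`, and feeding `H̃a` into a slot puts `0` into its `g`-component,
which kills `δ`, while moving `Hx` into its `h`-component. Each of the three terms
`[Hx,Hy,w]`, `[Hx,v,Hz]`, `[u,Hy,Hz]` therefore arises from exactly two slots.
-/

namespace ThreeLieAction

variable {K g h : Type*} [Field K] [AddCommGroup g] [Module K g] [AddCommGroup h] [Module K h]
  {Lg : ThreeLie K g} {Lh : ThreeLie K h} (A : ThreeLieAction K g h Lg Lh) (H : g →ₗ[K] h)

/-- `H` is a crossed homomorphism iff `crossedDefect A H x y z = - [Hx, Hy, Hz]`. -/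
def crossedDefect (x y z : g) : h :=
  A.ρ x y (H z) + A.ρ y z (H x) + A.ρ z x (H y) - H (Lg.br x y z)

@[simp]
lemma crossedDefect_zero_left (y z : g) : A.crossedDefect H 0 y z = 0 := by
  simp [crossedDefect]

@[simp]
lemma crossedDefect_zero_middle (x z : g) : A.crossedDefect H x 0 z = 0 := by
  simp [crossedDefect]

@[simp]
lemma crossedDefect_zero_right (x y : g) : A.crossedDefect H x y 0 = 0 := by
  simp [crossedDefect]

end ThreeLieAction

section DerivedBracket

variable {K g h : Type*} [Field K] [AddCommGroup g] [Module K g] [AddCommGroup h] [Module K h]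

def liftEnd (H : g →ₗ[K] h) (p : g × h) : g × h := (0, H p.1)

@[simp]
lemma liftEnd_apply (H : g →ₗ[K] h) (x : g) (u : h) : liftEnd H (x, u) = (0, H x) := rfl

variable {Lg : ThreeLie K g} {Lh : ThreeLie K h} (A : ThreeLieAction K g h Lg Lh) (H : g →ₗ[K] h)

lemma nrBr_sdBr_liftEnd (x y z : g) (u v w : h) :
    nrBr (sdBr A) (liftEnd H) (x, u) (y, v) (z, w) =
      (0, A.crossedDefect H x y z + Lh.br (H x) v w + Lh.br u (H y) w + Lh.br u v (H z)) := by
  simp only [nrBr, sdBr, liftEnd_apply, ThreeLieAction.crossedDefect, map_zero,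
    LinearMap.zero_apply, Prod.mk_add_mk, Prod.mk_sub_mk, Prod.mk.injEq]
  exact ⟨by abel, by abel⟩

lemma liftEnd_nrBr_sdBr_liftEnd (a b c : g × h) :
    liftEnd H (nrBr (sdBr A) (liftEnd H) a b c) = 0 := by
  rw [nrBr_sdBr_liftEnd, liftEnd_apply, map_zero, Prod.mk_zero_zero]

end DerivedBracket

theorem derived_bracket_square_general
    (K g h : Type*) [Field K] [AddCommGroup g] [Module K g]
    [AddCommGroup h] [Module K h] (Lg : ThreeLie K g) (Lh : ThreeLie K h)
    (A : ThreeLieAction K g h Lg Lh) (H : g →ₗ[K] h) :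
    ∀ (x y z : g) (u v w : h),
      nrBr (nrBr (sdBr A) (fun p => ((0 : g), H p.1))) (fun p => ((0 : g), H p.1))
          (x, u) (y, v) (z, w) =
        (2 : ℤ) • (((0 : g),
          Lh.br (H x) (H y) w + Lh.br (H x) v (H z) + Lh.br u (H y) (H z)) : g × h) := by
  intro x y z u v w
  change nrBr (nrBr (sdBr A) (liftEnd H)) (liftEnd H) (x, u) (y, v) (z, w) = _
  rw [nrBr, liftEnd_nrBr_sdBr_liftEnd]
  simp only [liftEnd_apply, nrBr_sdBr_liftEnd, ThreeLieAction.crossedDefect_zero_left,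
    ThreeLieAction.crossedDefect_zero_middle, ThreeLieAction.crossedDefect_zero_right, map_zero,
    LinearMap.zero_apply, Prod.mk_add_mk, sub_zero, add_zero, zero_add, two_smul, Prod.mk.injEq,
    true_and]
  abel

/-- Let `H` be a crossed homomorphism with respect to an action
`A`, let `D` be the semidirect product bracket on `E = g × h`, and let
`H̃(x,u) = (0, Hx)`.  Then
`[[D,H̃],H̃]((x,u),(y,v),(z,w)) = 2·(0, [Hx,Hy,w]_h + [Hx,v,Hz]_h + [u,Hy,Hz]_h)`. -/
theorem derived_bracket_square
    (K g h : Type*) [Field K] [CharZero K] [AddCommGroup g] [Module K g]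
    [AddCommGroup h] [Module K h] (Lg : ThreeLie K g) (Lh : ThreeLie K h)
    (A : ThreeLieAction K g h Lg Lh) (H : g →ₗ[K] h) (hH : IsCrossedHom A H) :
    ∀ (x y z : g) (u v w : h),
      nrBr (nrBr (sdBr A) (fun p => ((0 : g), H p.1))) (fun p => ((0 : g), H p.1))
          (x, u) (y, v) (z, w) =
        (2 : ℤ) • (((0 : g),
          Lh.br (H x) (H y) w + Lh.br (H x) v (H z) + Lh.br u (H y) (H z)) : g × h) :=
  derived_bracket_square_general K g h Lg Lh A H
end

section
/- Let ρ be an action of a 3-Lie algebra g on a 3-Lie algebra h, let D be the semidirect product bracket on E = g ⊕ h, and for a linear map H : g → h let H̃ ∈ End(E) be given by H̃(x,u) = (0, Hx). Then H is a crossed homomorphism with respect to ρ if and only if, for all x,y,z ∈ g, [D,H̃]((x,0),(y,0),(z,0)) + (1/6)·[[[D,H̃],H̃],H̃]((x,0),(y,0),(z,0)) = 0, where [·,·] denotes the iterated Nijenhuis–Richardson derived bracket of a trilinear map with a linear map. (Equivalently: crossed homomorphisms are precisely the Maurer–Cartan elements of the L∞-algebra (C*(g,h), l₁, l₃).) -/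
/-- With `D` the semidirect product bracket on `E = g × h` and
`H̃(x,u) = (0, Hx)`, a linear map `H : g → h` is a crossed homomorphism with respect
to the action `A` if and only if
`[D,H̃]((x,0),(y,0),(z,0)) + (1/6)·[[[D,H̃],H̃],H̃]((x,0),(y,0),(z,0)) = 0` for all
`x,y,z ∈ g`; i.e. crossed homomorphisms are precisely the Maurer–Cartan elements of
the `L∞`-algebra `(C*(g,h), l₁, l₃)`. -/
theorem crossedHom_iff_maurerCartan
    (K g h : Type*) [Field K] [CharZero K] [AddCommGroup g] [Module K g]
    [AddCommGroup h] [Module K h] (Lg : ThreeLie K g) (Lh : ThreeLie K h)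
    (A : ThreeLieAction K g h Lg Lh) (H : g →ₗ[K] h) :
    IsCrossedHom A H ↔
      ∀ x y z : g,
        nrBr (sdBr A) (fun p => ((0 : g), H p.1)) (x, 0) (y, 0) (z, 0)
          + (6 : K)⁻¹ •
            nrBr (nrBr (nrBr (sdBr A) (fun p => ((0 : g), H p.1)))
                (fun p => ((0 : g), H p.1))) (fun p => ((0 : g), H p.1))
              (x, 0) (y, 0) (z, 0)
          = 0 := by
  constructor
  · intro hH x y z
    simp [nrBr, sdBr, Prod.ext_iff]
    rw [hH x y z]
    module
  · intro hh
    intro x y z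
    have := hh x y z
    simp [nrBr, sdBr, Prod.ext_iff] at this
    linear_combination (norm := module) -this
end

section
/- Let H be a crossed homomorphism from a 3-Lie algebra g to a 3-Lie algebra h with respect to an action ρ, and let H' : g → h be a linear map. Then H + H' is a crossed homomorphism with respect to ρ if and only if for all x,y,z ∈ g: H'([x,y,z]_g) = ρ(x,y)H'(z) + ρ(y,z)H'(x) + ρ(z,x)H'(y) + [H'x,Hy,Hz]_h + [Hx,H'y,Hz]_h + [Hx,Hy,H'z]_h + [H'x,H'y,Hz]_h + [H'x,Hy,H'z]_h + [Hx,H'y,H'z]_h + [H'x,H'y,H'z]_h. (This equation is the Maurer–Cartan equation l₁^H(H') + ½l₂^H(H',H') + (1/6)l₃^H(H',H',H') = 0 of the L∞-algebra obtained by twisting with H, which therefore controls deformations of H.) -/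
/-- Let `H` be a crossed homomorphism with respect to an action
`A`, and `H' : g → h` a linear map.  Then `H + H'` is a crossed homomorphism with
respect to `A` if and only if `H'` satisfies
`H'[x,y,z] = ρ(x,y)H'z + ρ(y,z)H'x + ρ(z,x)H'y + [H'x,Hy,Hz] + [Hx,H'y,Hz]
 + [Hx,Hy,H'z] + [H'x,H'y,Hz] + [H'x,Hy,H'z] + [Hx,H'y,H'z] + [H'x,H'y,H'z]`,
i.e. the Maurer–Cartan equation of the `L∞`-algebra obtained by twisting with `H`,
which therefore controls deformations of `H`. -/
theorem sum_crossedHom_iff_twisted_maurerCartan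
    (K g h : Type*) [Field K] [CharZero K] [AddCommGroup g] [Module K g]
    [AddCommGroup h] [Module K h] (Lg : ThreeLie K g) (Lh : ThreeLie K h)
    (A : ThreeLieAction K g h Lg Lh) (H : g →ₗ[K] h) (hH : IsCrossedHom A H)
    (H' : g →ₗ[K] h) :
    IsCrossedHom A (H + H') ↔
      ∀ x y z : g,
        H' (Lg.br x y z) =
          A.ρ x y (H' z) + A.ρ y z (H' x) + A.ρ z x (H' y) +
          Lh.br (H' x) (H y) (H z) + Lh.br (H x) (H' y) (H z) +
            Lh.br (H x) (H y) (H' z) +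
          Lh.br (H' x) (H' y) (H z) + Lh.br (H' x) (H y) (H' z) +
            Lh.br (H x) (H' y) (H' z) +
          Lh.br (H' x) (H' y) (H' z) := by
  constructor
  · intro hsum x y z
    have e := hsum x y z
    have e0 := hH x y z
    simp only [LinearMap.add_apply, map_add] at e
    have e1 := eq_sub_of_add_eq' e
    rw [e0] at e1
    rw [e1]; abel
  · intro hmc x y z
    have e := hmc x y z
    have e0 := hH x y z
    simp only [LinearMap.add_apply, map_add]
    rw [e, e0]; abel
end
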